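/- arXiv:1804.02856 — 2 statements merged into one kernel-verified Lean document; each statement's English description precedes it below -/
import Mathlib

section
/- Suppose sequences (x_n), (y_n), (a_n²), (b_n) of differentiable functions of c ∈ (0,1) satisfy b_n(c) = x_n(c) + (n+(n+α+β)c-γ)/(1-c) and ((1-c)/c)a_n²(c) = y_n(c) + Σ_{k=0}^{n-1} x_k(c) + n(n+α+β-γ-1)/(1-c), together with the Toda equations c·(a_n²)' = a_n²(b_n - b_{n-1}) for n ≥ 1 and c·b_n' = a_{n+1}² - a_n² for n ≥ 0, and a_0² = 0. Then (1-c)x_n' = y_{n+1} - y_n + x_n for all n ≥ 0. -/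
open Set Filter Topology

/-!
Multiply the second Toda equation by `(1 - c) / c` and evaluate both sides of
`(1 - c) b_n' = (1 - c)/c (a_{n+1}² - a_n²)` through the substitutions. The rational part of
`b_n` contributes `(2n + α + β - γ) / (1 - c)` to `(1 - c) b_n'`, and the difference of the
rational parts of the two `a²`-relations is the same term, so it cancels.
-/

theorem hasDerivAt_linear_div_one_sub (p q : ℝ) {c : ℝ} (hc : c ≠ 1) :
    HasDerivAt (fun t => (p + q * t) / (1 - t)) ((p + q) / (1 - c) ^ 2) c := by
  have hnum : HasDerivAt (fun t => p + q * t) q c := by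
    simpa using ((hasDerivAt_id c).const_mul q).const_add p
  have hden : HasDerivAt (fun t => 1 - t) (-1) c := by
    simpa using (hasDerivAt_id c).const_sub 1
  exact (hnum.div hden (sub_ne_zero.mpr hc.symm)).congr_deriv (by ring)

theorem deriv_eq_deriv_add_of_eqOn_add_linear_div_one_sub {f g : ℝ → ℝ} {s : Set ℝ}
    {p q c : ℝ} (hs : s ∈ 𝓝 c) (hc : c ≠ 1) (hg : DifferentiableAt ℝ g c)
    (hfg : ∀ t ∈ s, f t = g t + (p + q * t) / (1 - t)) :
    deriv f c = deriv g c + (p + q) / (1 - c) ^ 2 :=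
  ((hg.hasDerivAt.add (hasDerivAt_linear_div_one_sub p q hc)).congr_of_eventuallyEq
    (eventually_of_mem hs hfg)).deriv

theorem toda_for_x_general (α β γ : ℝ) (x y a2 b : ℕ → ℝ → ℝ)
    (hdx : ∀ n, ∀ c ∈ Ioo (0:ℝ) 1, DifferentiableAt ℝ (x n) c)
    (hb : ∀ n : ℕ, ∀ c ∈ Ioo (0:ℝ) 1,
      b n c = x n c + ((n : ℝ) + ((n : ℝ) + α + β) * c - γ) / (1 - c))
    (ha : ∀ n : ℕ, ∀ c ∈ Ioo (0:ℝ) 1,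
      (1 - c) / c * a2 n c = y n c + (∑ k ∈ Finset.range n, x k c)
        + (n : ℝ) * ((n : ℝ) + α + β - γ - 1) / (1 - c))
    (hToda2 : ∀ n : ℕ, ∀ c ∈ Ioo (0:ℝ) 1,
      c * deriv (b n) c = a2 (n + 1) c - a2 n c) :
    ∀ n : ℕ, ∀ c ∈ Ioo (0:ℝ) 1,
      (1 - c) * deriv (x n) c = y (n + 1) c - y n c + x n c := by
  intro n c hc
  have hc0 : c ≠ 0 := hc.1.ne'
  have hc1 : 1 - c ≠ 0 := sub_ne_zero.mpr hc.2.ne'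
  set K : ℝ := 2 * n + α + β - γ
  have hderiv_b : deriv (b n) c = deriv (x n) c + K / (1 - c) ^ 2 := by
    rw [deriv_eq_deriv_add_of_eqOn_add_linear_div_one_sub (p := n - γ) (q := n + α + β)
      (isOpen_Ioo.mem_nhds hc) hc.2.ne (hdx n c hc) fun t ht => by rw [hb n t ht]; ring_nf]
    ring
  have hgap : (1 - c) / c * (a2 (n + 1) c - a2 n c)
      = y (n + 1) c - y n c + x n c + K / (1 - c) := by
    rw [mul_sub, ha (n + 1) c hc, ha n c hc, Finset.sum_range_succ]
    push_cast
    field_simp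
    ring
  calc (1 - c) * deriv (x n) c
      = (1 - c) / c * (c * deriv (b n) c) - K / (1 - c) := by
        rw [hderiv_b]; field_simp; ring
    _ = y (n + 1) c - y n c + x n c := by rw [hToda2 n c hc, hgap]; ring

/-- Proposition 5.1, eq. (5.5): the Toda equation for x_n. -/
theorem toda_for_x (α β γ : ℝ) (x y a2 b : ℕ → ℝ → ℝ)
    (hdx : ∀ n, ∀ c ∈ Ioo (0:ℝ) 1, DifferentiableAt ℝ (x n) c)
    (hdy : ∀ n, ∀ c ∈ Ioo (0:ℝ) 1, DifferentiableAt ℝ (y n) c)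
    (hda : ∀ n, ∀ c ∈ Ioo (0:ℝ) 1, DifferentiableAt ℝ (a2 n) c)
    (hdb : ∀ n, ∀ c ∈ Ioo (0:ℝ) 1, DifferentiableAt ℝ (b n) c)
    (hb : ∀ n : ℕ, ∀ c ∈ Ioo (0:ℝ) 1,
      b n c = x n c + ((n : ℝ) + ((n : ℝ) + α + β) * c - γ) / (1 - c))
    (ha : ∀ n : ℕ, ∀ c ∈ Ioo (0:ℝ) 1,
      (1 - c) / c * a2 n c = y n c + (∑ k ∈ Finset.range n, x k c)
        + (n : ℝ) * ((n : ℝ) + α + β - γ - 1) / (1 - c))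
    (hToda1 : ∀ n : ℕ, 1 ≤ n → ∀ c ∈ Ioo (0:ℝ) 1,
      c * deriv (a2 n) c = a2 n c * (b n c - b (n - 1) c))
    (hToda2 : ∀ n : ℕ, ∀ c ∈ Ioo (0:ℝ) 1,
      c * deriv (b n) c = a2 (n + 1) c - a2 n c)
    (ha0 : ∀ c ∈ Ioo (0:ℝ) 1, a2 0 c = 0) :
    ∀ n : ℕ, ∀ c ∈ Ioo (0:ℝ) 1,
      (1 - c) * deriv (x n) c = y (n + 1) c - y n c + x n c :=
  toda_for_x_general α β γ x y a2 b hdx hb ha hToda2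
end

section
/- For the Meixner case: the sequences a_n² = n(n+β-1)c/(1-c)² and b_n = (n+(n+β)c)/(1-c) satisfy the Toda equations c·(d/dc)(a_n²) = a_n²(b_n - b_{n-1}) for n ≥ 1 and c·(d/dc)(b_n) = a_{n+1}² - a_n² for n ≥ 0. -/
/-! The coefficients are rational functions of `c` with poles only at `c = 1`, so both equations
are quotient-rule computations followed by polynomial identities. The key cancellation is
`b n - b (n - 1) = (1 + c) / (1 - c)`, independent of `n` and `β`. -/

open Set

noncomputable section

namespace Meixner

-- The index is a real parameter, so that `n - 1` is real subtraction rather than truncated.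
def a2 (β x c : ℝ) : ℝ := x * (x + β - 1) * c / (1 - c) ^ 2

def b (β x c : ℝ) : ℝ := (x + (x + β) * c) / (1 - c)

variable (β x : ℝ) {c : ℝ}

theorem hasDerivAt_a2 (hc : c ≠ 1) :
    HasDerivAt (a2 β x) (x * (x + β - 1) * (1 + c) / (1 - c) ^ 3) c := by
  have hc' : 1 - c ≠ 0 := sub_ne_zero.mpr hc.symm
  have hnum : HasDerivAt (fun c : ℝ => x * (x + β - 1) * c) (x * (x + β - 1)) c := by
    simpa using (hasDerivAt_id c).const_mul (x * (x + β - 1))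
  have hden : HasDerivAt (fun c : ℝ => (1 - c) ^ 2) (2 * (1 - c) ^ 1 * (0 - 1)) c :=
    ((hasDerivAt_const c 1).sub (hasDerivAt_id c)).pow 2
  refine (hnum.div hden (pow_ne_zero 2 hc')).congr_deriv ?_
  field_simp
  ring

theorem hasDerivAt_b (hc : c ≠ 1) : HasDerivAt (b β x) ((2 * x + β) / (1 - c) ^ 2) c := by
  have hc' : 1 - c ≠ 0 := sub_ne_zero.mpr hc.symm
  have hnum : HasDerivAt (fun c : ℝ => x + (x + β) * c) (x + β) c := by
    simpa using ((hasDerivAt_id c).const_mul (x + β)).const_add x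
  have hden : HasDerivAt (fun c : ℝ => 1 - c) (-1) c := by
    simpa using (hasDerivAt_id c).const_sub 1
  refine (hnum.div hden hc').congr_deriv ?_
  field_simp
  ring

theorem b_sub_b_sub_one (hc : c ≠ 1) : b β x c - b β (x - 1) c = (1 + c) / (1 - c) := by
  have hc' : 1 - c ≠ 0 := sub_ne_zero.mpr hc.symm
  rw [b, b]
  field_simp
  ring

theorem toda_a2 (hc : c ≠ 1) :
    c * deriv (a2 β x) c = a2 β x c * (b β x c - b β (x - 1) c) := by
  have hc' : 1 - c ≠ 0 := sub_ne_zero.mpr hc.symm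
  rw [(hasDerivAt_a2 β x hc).deriv, b_sub_b_sub_one β x hc, a2]
  field_simp

theorem toda_b (hc : c ≠ 1) : c * deriv (b β x) c = a2 β (x + 1) c - a2 β x c := by
  have hc' : 1 - c ≠ 0 := sub_ne_zero.mpr hc.symm
  rw [(hasDerivAt_b β x hc).deriv, a2, a2]
  field_simp
  ring

end Meixner

end

theorem meixner_toda_general (β : ℝ) :
    let a2 : ℕ → ℝ → ℝ := fun n c => (n : ℝ) * ((n : ℝ) + β - 1) * c / (1 - c) ^ 2
    let b : ℕ → ℝ → ℝ := fun n c => ((n : ℝ) + ((n : ℝ) + β) * c) / (1 - c)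
    (∀ n : ℕ, 1 ≤ n → ∀ c ∈ Ioo (0:ℝ) 1,
        c * deriv (a2 n) c = a2 n c * (b n c - b (n - 1) c)) ∧
    (∀ n : ℕ, ∀ c ∈ Ioo (0:ℝ) 1,
        c * deriv (b n) c = a2 (n + 1) c - a2 n c) := by
  refine ⟨fun n hn c hc => ?_, fun n c hc => ?_⟩
  · have h := Meixner.toda_a2 β n hc.2.ne
    rwa [← Nat.cast_pred hn] at h
  · have h := Meixner.toda_b β n hc.2.ne
    rwa [← Nat.cast_succ] at h

/-- the Meixner recurrence coefficients satisfy the Toda equations. -/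
theorem meixner_toda (β : ℝ) (hβ : 0 < β) :
    let a2 : ℕ → ℝ → ℝ := fun n c => (n : ℝ) * ((n : ℝ) + β - 1) * c / (1 - c) ^ 2
    let b : ℕ → ℝ → ℝ := fun n c => ((n : ℝ) + ((n : ℝ) + β) * c) / (1 - c)
    (∀ n : ℕ, 1 ≤ n → ∀ c ∈ Ioo (0:ℝ) 1,
        c * deriv (a2 n) c = a2 n c * (b n c - b (n - 1) c)) ∧
    (∀ n : ℕ, ∀ c ∈ Ioo (0:ℝ) 1,
        c * deriv (b n) c = a2 (n + 1) c - a2 n c) :=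
  meixner_toda_general β
end
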